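/- The gem graph is module-composed but not distance hereditary, and the complement of K₃,₃ minus an edge is distance hereditary but not module-composed; hence neither of the classes of module-composed graphs and distance hereditary graphs contains the other. -/

import Mathlib

/-!
The gem contains the induced path `0-1-2-3`, whose ends are at distance 3 in the path but have the
common neighbour `4` in the gem. Conversely, co-(K₃,₃ − e) is two triangles joined by one edge:
every path between the triangles uses that edge, so connected induced subgraphs keep distances,
while whichever vertex `x` comes last in an ordering, some vertex other than `x` sees only part of
the neighbourhood of `x`. Both graphs are finite, so these facts are checked by `decide`, after
reducing distance heredity to comparing walks and module-composedness to the last vertex.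
-/

open scoped Classical

/-- `M` is a module (homogeneous set) of `G`: every two vertices of `M`
have the same neighbours outside `M`. -/
def SimpleGraph.IsModule {V : Type*} (G : SimpleGraph V) (M : Set V) : Prop :=
  ∀ v₁ ∈ M, ∀ v₂ ∈ M, ∀ w ∉ M, (G.Adj v₁ w ↔ G.Adj v₂ w)

/-- `G` is module-composed: there is a linear ordering `v₀, …, v_{n-1}` of the
vertices such that for every `i ≥ 1` the neighbourhood of `vᵢ` inside the
induced subgraph on `{v₀, …, v_{i-1}}` is a module of that induced subgraph. -/
def SimpleGraph.ModuleComposed {V : Type*} [Fintype V] (G : SimpleGraph V) : Prop :=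
  ∃ e : Fin (Fintype.card V) ≃ V,
    ∀ i : Fin (Fintype.card V), 0 < (i : ℕ) →
      (G.induce {v | ∃ j, j < i ∧ e j = v}).IsModule
        {w : {v | ∃ j, j < i ∧ e j = v} | G.Adj (e i) ↑w}


/-- `G` is distance hereditary: in every connected induced subgraph, distances
agree with distances in `G`. -/
def SimpleGraph.DistHereditary {V : Type*} (G : SimpleGraph V) : Prop :=
  ∀ S : Set V, ∀ u v : S, (G.induce S).Reachable u v →
    (G.induce S).dist u v = G.dist ↑u ↑v

/-- The gem graph: a path `0-1-2-3` together with a fifth vertex `4`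
adjacent to all four path vertices. -/
def gem : SimpleGraph (Fin 5) :=
  SimpleGraph.fromRel (fun a b =>
    (a, b) ∈ [((0 : Fin 5), (1 : Fin 5)), (1, 2), (2, 3),
              (4, 0), (4, 1), (4, 2), (4, 3)])

/-- `K₃,₃ − e`: the complete bipartite graph with parts `{0,1,2}` and
`{3,4,5}`, minus the edge `{0,3}`. -/
def K33MinusEdge : SimpleGraph (Fin 6) :=
  SimpleGraph.fromRel (fun a b =>
    (a : ℕ) < 3 ∧ 3 ≤ (b : ℕ) ∧ ¬((a : ℕ) = 0 ∧ (b : ℕ) = 3))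

namespace SimpleGraph

variable {V : Type*} {G : SimpleGraph V}

instance [Fintype V] [DecidableRel G.Adj] (M : Set V) [DecidablePred (· ∈ M)] :
    Decidable (G.IsModule M) :=
  inferInstanceAs (Decidable (∀ v₁ ∈ M, ∀ v₂ ∈ M, ∀ w ∉ M, (G.Adj v₁ w ↔ G.Adj v₂ w)))

instance [DecidableRel G.Adj] (s : Set V) : DecidableRel (G.induce s).Adj :=
  fun a b => inferInstanceAs (Decidable (G.Adj a b))

instance [DecidableEq V] [DecidableRel G.Adj] [G.LocallyFinite] (u v : V) (n : ℕ) :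
    Decidable (∃ p : G.Walk u v, p.length = n) :=
  decidable_of_iff (G.finsetWalkLength n u v).Nonempty <| by
    simp only [Finset.Nonempty, mem_finsetWalkLength_iff]

theorem Reachable.dist_le_dist_induce {S : Set V} {u v : S} (hr : (G.induce S).Reachable u v) :
    G.dist u v ≤ (G.induce S).dist u v := by
  obtain ⟨p, hp⟩ := hr.exists_walk_length_eq_dist
  exact hp ▸ (p.length_map (Embedding.induce S).toHom) ▸ G.dist_le _

theorem distHereditary_iff_exists_walk_forall_length_le : G.DistHereditary ↔
    ∀ S : Set V, ∀ u v : S, (G.induce S).Reachable u v →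
      ∃ q : (G.induce S).Walk u v, ∀ p : G.Walk u v, q.length ≤ p.length := by
  refine ⟨fun hG S u v hr => ?_, fun h S u v hr => ?_⟩
  · obtain ⟨q, hq⟩ := hr.exists_walk_length_eq_dist
    exact ⟨q, fun p => hq ▸ hG S u v hr ▸ G.dist_le p⟩
  · obtain ⟨q, hq⟩ := h S u v hr
    obtain ⟨p, hp⟩ := (hr.map (Embedding.induce S).toHom).exists_walk_length_eq_dist
    exact le_antisymm (hp ▸ ((G.induce S).dist_le q).trans (hq p)) hr.dist_le_dist_induce

theorem ModuleComposed.exists_isModule_neighborSet_compl [Fintype V] (hG : G.ModuleComposed)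
    (hV : 1 < Fintype.card V) :
    ∃ x, (G.induce {v | v ≠ x}).IsModule {w : {v | v ≠ x} | G.Adj x w} := by
  obtain ⟨e, he⟩ := hG
  let last : Fin (Fintype.card V) := ⟨Fintype.card V - 1, by omega⟩
  have hprefix : {v | ∃ j, j < last ∧ e j = v} = {v | v ≠ e last} := by
    ext v
    constructor
    · rintro ⟨j, hj, rfl⟩
      exact fun h => hj.ne (e.injective h)
    · intro hv
      have hne : e.symm v ≠ last := fun h => hv (by rw [← h, e.apply_symm_apply])
      refine ⟨e.symm v, lt_of_le_of_ne (Fin.le_iff_val_le_val.2 ?_) hne, e.apply_symm_apply v⟩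
      have := (e.symm v).isLt
      simp only [last]
      omega
  have hlast := he last (by simp only [last]; omega)
  rw [hprefix] at hlast
  exact ⟨e last, hlast⟩

end SimpleGraph

instance : DecidableRel gem.Adj :=
  inferInstanceAs (DecidableRel (SimpleGraph.fromRel _).Adj)

instance : DecidableRel K33MinusEdge.Adj :=
  inferInstanceAs (DecidableRel (SimpleGraph.fromRel _).Adj)

-- Along `0, 1, 2, 3, 4` every new neighbourhood is a single vertex or everything.
theorem gem_moduleComposed : gem.ModuleComposed :=
  ⟨finCongr (Fintype.card_fin 5), by decide⟩

theorem gem_not_distHereditary : ¬ gem.DistHereditary := fun h => by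
  let S : Set (Fin 5) := ↑({0, 1, 2, 3} : Finset (Fin 5))
  let u : S := ⟨0, by decide⟩
  let v : S := ⟨3, by decide⟩
  let p : gem.Walk 0 3 :=
    .cons (show gem.Adj 0 4 by decide) (.cons (show gem.Adj 4 3 by decide) .nil)
  obtain ⟨q, hq⟩ :=
    SimpleGraph.distHereditary_iff_exists_walk_forall_length_le.1 h S u v (by decide)
  have hinduced : ∀ k ≤ 2, ¬ ∃ q : (gem.induce S).Walk u v, q.length = k := by decide
  exact hinduced _ (hq p) ⟨q, rfl⟩

set_option maxRecDepth 40000 in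
theorem K33MinusEdge_compl_distHereditary : K33MinusEdgeᶜ.DistHereditary := by
  have hcheck : ∀ s : Finset (Fin 6), ∀ u v : (s : Set (Fin 6)),
      (K33MinusEdgeᶜ.induce s).Reachable u v → ∃ n : Fin 6,
        (∃ q : (K33MinusEdgeᶜ.induce s).Walk u v, q.length = n) ∧
          ∀ k < (n : ℕ), ¬ ∃ p : K33MinusEdgeᶜ.Walk u v, p.length = k := by
    decide
  rw [SimpleGraph.distHereditary_iff_exists_walk_forall_length_le]
  intro S u v hr
  obtain ⟨s, rfl⟩ : ∃ s : Finset (Fin 6), ↑s = S := ⟨S.toFinset, S.coe_toFinset⟩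
  obtain ⟨n, ⟨q, hq⟩, hshort⟩ := hcheck s u v hr
  exact ⟨q, fun p => not_lt.1 fun hp => hshort _ (hq ▸ hp) ⟨p, rfl⟩⟩

theorem K33MinusEdge_compl_not_moduleComposed : ¬ K33MinusEdgeᶜ.ModuleComposed := by
  intro h
  obtain ⟨x, hx⟩ := h.exists_isModule_neighborSet_compl (by decide)
  revert x hx
  decide

/-- The gem is module-composed but not distance hereditary, while the
complement of `K₃,₃ − e` is distance hereditary but not module-composed;
hence neither of the two graph classes contains the other. -/
theorem moduleComposed_distHereditary_incomparable :
    gem.ModuleComposed ∧ ¬ gem.DistHereditary ∧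
    K33MinusEdgeᶜ.DistHereditary ∧ ¬ K33MinusEdgeᶜ.ModuleComposed ∧
    ¬ (∀ (V : Type) [Fintype V] (G : SimpleGraph V),
        G.ModuleComposed → G.DistHereditary) ∧
    ¬ (∀ (V : Type) [Fintype V] (G : SimpleGraph V),
        G.DistHereditary → G.ModuleComposed) := by
  refine ⟨gem_moduleComposed, gem_not_distHereditary, K33MinusEdge_compl_distHereditary,
    K33MinusEdge_compl_not_moduleComposed, fun h => ?_, fun h => ?_⟩
  · exact gem_not_distHereditary (h _ gem gem_moduleComposed)
  · exact K33MinusEdge_compl_not_moduleComposed (h _ _ K33MinusEdge_compl_distHereditary)
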